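/- arXiv:1101.4999 — 5 statements merged into one kernel-verified Lean document; each statement's English description precedes it below -/
import Mathlib

section
/- Let F be a field and F(X_1,...,X_m) a nonzero polynomial with leading monomial X_1^{i_1}⋯X_m^{i_m} with respect to a lexicographic ordering. For finite sets S_1,...,S_m ⊆ F with |S_j| = s_j, the number of zeros of F in S_1 × ... × S_m is at most i_1 s_2⋯s_m + s_1 i_2 s_3⋯s_m + ... + s_1⋯s_{m−1} i_m. -/
/-!
Induct on the number of variables, viewing `p` as a polynomial in `X₀` with coefficients in
`R[X₁, …, Xₙ]`. Since `i` is lex-maximal in the support, `X₀` occurs in `p` with degree at most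
`i₀`, and the coefficient `g` of `X₀ ^ i₀` has lex-leading exponent `(i₁, …, iₙ)`. Over a tail
`t` with `g(t) ≠ 0`, `p(·, t)` is a nonzero polynomial of degree at most `i₀`, hence has at most
`i₀` zeros in `S₀`; the tails with `g(t) = 0` are counted by induction and each carries at most
`#S₀` zeros.
-/

open Finset Fintype

theorem Finsupp.toLex_cons_le_toLex_cons_iff {n : ℕ} {M : Type*} [Zero M] [LinearOrder M]
    {a b : M} {x y : Fin n →₀ M} :
    toLex (cons a x) ≤ toLex (cons b y) ↔ a < b ∨ a = b ∧ toLex x ≤ toLex y := by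
  rw [le_iff_lt_or_eq, le_iff_lt_or_eq, toLex_inj, toLex_inj, cons_injective2.eq_iff]
  show Pi.Lex (· < ·) (· < ·) (Fin.cons a x : Fin (n + 1) → M) (Fin.cons b y) ∨ _ ↔ _
  rw [Fin.pi_lex_lt_cons_cons]
  change (a < b ∨ a = b ∧ toLex x < toLex y) ∨ _ ↔ _
  tauto

theorem Fin.sum_mul_prod_erase_succ {n : ℕ} {M : Type*} [CommSemiring M]
    (i s : Fin (n + 1) → M) :
    ∑ j, i j * ∏ l ∈ univ.erase j, s l =
      i 0 * ∏ l : Fin n, s l.succ + s 0 * ∑ j : Fin n, i j.succ * ∏ l ∈ univ.erase j, s l.succ := by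
  have h0 : (univ : Finset (Fin (n + 1))).erase 0 = univ.map (succEmb n) := by
    rw [univ_succ, erase_cons]; rfl
  have hsucc (j : Fin n) : (univ : Finset (Fin (n + 1))).erase j.succ =
      Finset.cons 0 ((univ.erase j).map (succEmb n)) (by simp [succ_ne_zero]) := by
    ext l; cases l using Fin.cases <;> simp [(succ_ne_zero _).symm]
  simp only [sum_univ_succ, h0, hsucc, Finset.prod_cons, prod_map, mul_sum, coe_succEmb]
  congr 1
  refine sum_congr rfl fun j _ ↦ ?_
  ring

theorem Fin.card_filter_piFinset_eq_sum_card_filter_cons {n : ℕ} {α : Type*}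
    (S : Fin (n + 1) → Finset α) (P : (Fin (n + 1) → α) → Prop) [DecidablePred P] :
    #{x ∈ piFinset S | P x} = ∑ t ∈ piFinset (tail S), #{a ∈ S 0 | P (cons a t)} := by
  have hS : piFinset S = (S 0 ×ˢ piFinset (tail S)).map (consEquiv fun _ ↦ α).toEmbedding := by
    simpa using filter_piFinset_eq_map_consEquiv S (fun _ ↦ True)
  rw [hS, filter_map, card_map, card_filter, sum_product_right]
  simp only [card_filter]
  rfl

namespace MvPolynomial

variable {R : Type*} [CommRing R]

section finSuccEquiv

variable {n : ℕ} {p : MvPolynomial (Fin (n + 1)) R}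

theorem natDegree_finSuccEquiv_le_of_lex_le {i : Fin (n + 1) →₀ ℕ}
    (hlead : ∀ j ∈ p.support, toLex j ≤ toLex i) : (finSuccEquiv R n p).natDegree ≤ i 0 := by
  rw [natDegree_finSuccEquiv, degreeOf_le_iff]
  intro j hj
  have hj := hlead j hj
  rw [← j.cons_tail, ← i.cons_tail, Finsupp.toLex_cons_le_toLex_cons_iff] at hj
  omega

theorem lex_le_tail_of_mem_support_coeff_finSuccEquiv {i : Fin (n + 1) →₀ ℕ}
    (hlead : ∀ j ∈ p.support, toLex j ≤ toLex i) {j : Fin n →₀ ℕ}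
    (hj : j ∈ ((finSuccEquiv R n p).coeff (i 0)).support) : toLex j ≤ toLex i.tail := by
  have hj := hlead _ (mem_support_coeff_finSuccEquiv.mp hj)
  rw [← i.cons_tail, Finsupp.toLex_cons_le_toLex_cons_iff] at hj
  simpa using hj

theorem card_filter_eval_cons_eq_zero_le [IsDomain R] [DecidableEq R] {d : ℕ}
    (hd : (finSuccEquiv R n p).natDegree ≤ d) {t : Fin n → R}
    (ht : eval t ((finSuccEquiv R n p).coeff d) ≠ 0) (T : Finset R) :
    #{a ∈ T | eval (Fin.cons a t) p = 0} ≤ d := by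
  set P := (finSuccEquiv R n p).map (eval t)
  have hP : P ≠ 0 := fun h ↦ ht (by simpa [P] using congr_arg (·.coeff d) h)
  calc #{a ∈ T | eval (Fin.cons a t) p = 0} ≤ P.natDegree :=
        Polynomial.card_le_degree_of_subset_roots fun a ha ↦ by
          rw [mem_val, mem_filter, eval_eq_eval_mv_eval'] at ha
          exact (Polynomial.mem_roots hP).mpr ha.2
    _ ≤ d := Polynomial.natDegree_map_le.trans hd

end finSuccEquiv

theorem schwartz_zippel_lex [IsDomain R] [DecidableEq R] :
    ∀ {n : ℕ} {p : MvPolynomial (Fin n) R} {i : Fin n →₀ ℕ}, coeff i p ≠ 0 →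
      (∀ j ∈ p.support, toLex j ≤ toLex i) → ∀ S : Fin n → Finset R,
      #{x ∈ piFinset S | eval x p = 0} ≤ ∑ j, i j * ∏ l ∈ univ.erase j, #(S l)
  | 0, p, i, hi, _, S => by
    rw [p.eq_C_of_isEmpty] at hi ⊢
    simp_all
  | n + 1, p, i, hi, hlead, S => by
    set g := (finSuccEquiv R n p).coeff (i 0)
    have hg : coeff i.tail g ≠ 0 := by rwa [finSuccEquiv_coeff_coeff, Finsupp.cons_tail]
    have hfiber (t : Fin n → R) : #{a ∈ S 0 | eval (Fin.cons a t) p = 0} ≤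
        (if eval t g = 0 then #(S 0) else 0) + i 0 := by
      split_ifs with ht
      · exact (card_filter_le _ _).trans (Nat.le_add_right _ _)
      · exact (card_filter_eval_cons_eq_zero_le (natDegree_finSuccEquiv_le_of_lex_le hlead)
          ht _).trans (Nat.le_add_left _ _)
    calc #{x ∈ piFinset S | eval x p = 0}
        = ∑ t ∈ piFinset (Fin.tail S), #{a ∈ S 0 | eval (Fin.cons a t) p = 0} :=
          Fin.card_filter_piFinset_eq_sum_card_filter_cons _ _
      _ ≤ ∑ t ∈ piFinset (Fin.tail S), ((if eval t g = 0 then #(S 0) else 0) + i 0) :=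
          sum_le_sum fun t _ ↦ hfiber t
      _ = #(S 0) * #{t ∈ piFinset (Fin.tail S) | eval t g = 0} +
            i 0 * ∏ l : Fin n, #(S l.succ) := by
          simp only [sum_add_distrib, sum_ite, sum_const_zero, sum_const, card_piFinset,
            smul_eq_mul, add_zero, Fin.tail]
          ring
      _ ≤ #(S 0) * ∑ j : Fin n, i.tail j * ∏ l ∈ univ.erase j, #(S l.succ) +
            i 0 * ∏ l : Fin n, #(S l.succ) := by
          gcongr
          exact schwartz_zippel_lex hg
            (fun _ ↦ lex_le_tail_of_mem_support_coeff_finSuccEquiv hlead) (Fin.tail S)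
      _ = ∑ j, i j * ∏ l ∈ univ.erase j, #(S l) := by
          rw [Fin.sum_mul_prod_erase_succ, add_comm]
          rfl

end MvPolynomial

theorem schwartz_zippel_leading_monomial_general {F : Type*} [Field F] [DecidableEq F] {m : ℕ}
    (f : MvPolynomial (Fin m) F) (i : Fin m →₀ ℕ)
    (hcoeff : MvPolynomial.coeff i f ≠ 0)
    (hlead : ∀ j ∈ f.support, toLex j ≤ toLex i)
    (S : Fin m → Finset F) :
    ((Fintype.piFinset S).filter (fun p => MvPolynomial.eval p f = 0)).card ≤
      ∑ j, i j * ∏ l ∈ Finset.univ.erase j, (S l).card :=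
  MvPolynomial.schwartz_zippel_lex hcoeff hlead S

/-- **Schwartz–Zippel via the leading monomial.** If the leading monomial of a
nonzero polynomial `f` with respect to the lexicographic ordering (with `X_m ≺ ⋯ ≺ X_1`) is
`X_1^{i_1} ⋯ X_m^{i_m}`, then the number of zeros of `f` in `S_1 × ⋯ × S_m` is at most
`i_1 s_2 ⋯ s_m + s_1 i_2 s_3 ⋯ s_m + ⋯ + s_1 ⋯ s_{m−1} i_m`. -/
theorem schwartz_zippel_leading_monomial {F : Type*} [Field F] [DecidableEq F] {m : ℕ}
    (f : MvPolynomial (Fin m) F) (hf : f ≠ 0) (i : Fin m →₀ ℕ)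
    (hcoeff : MvPolynomial.coeff i f ≠ 0)
    (hlead : ∀ j ∈ f.support, toLex j ≤ toLex i)
    (S : Fin m → Finset F) :
    ((Fintype.piFinset S).filter (fun p => MvPolynomial.eval p f = 0)).card ≤
      ∑ j, i j * ∏ l ∈ Finset.univ.erase j, (S l).card :=
  schwartz_zippel_leading_monomial_general f i hcoeff hlead S
end

section
/- The minimum distance of the affine variety code E(M,S) is at least min{(s_1−i_1)(s_2−i_2)⋯(s_m−i_m) : X_1^{i_1}⋯X_m^{i_m} ∈ M}. -/
/-!
Write a nonzero `f` as a polynomial in `X₀` over the remaining variables, of degree `d` with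
leading coefficient `g`. By induction `g` is nonzero at `∏_{j ≥ 1} (s_j - i_j)` points of the
smaller grid for some monomial `i` of `g`; above each of them `f` restricts to a nonzero polynomial
of degree `d` in `X₀`, which is nonzero at `s₀ - d` points of `S₀`. So `f` is nonzero at
`∏_j (s_j - i'_j)` grid points for its monomial `i' = X₀^d · i`, and when `f` is supported
in `M` this monomial lies in `M`.
-/

open MvPolynomial Finset Fintype

namespace Polynomial

variable {R : Type*} [CommRing R] [IsDomain R] [DecidableEq R]

theorem card_sub_natDegree_le_card_filter_eval_ne_zero {p : R[X]} (hp : p ≠ 0) (T : Finset R) :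
    #T - p.natDegree ≤ #{x ∈ T | p.eval x ≠ 0} := by
  have hroots : #{x ∈ T | p.eval x = 0} ≤ p.natDegree :=
    card_le_degree_of_subset_roots fun x hx => by
      simp only [Finset.filter_val, Multiset.mem_filter] at hx
      exact (mem_roots hp).2 hx.2
  have := card_filter_add_card_filter_not (s := T) (fun x => p.eval x = 0)
  simp only [ne_eq]
  omega

end Polynomial

namespace Finset

theorem card_filter_piFinset_eq_sum_card_filter_cons {α : Type*} {n : ℕ}
    (S : Fin (n + 1) → Finset α) (P : (Fin (n + 1) → α) → Prop) [DecidablePred P] :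
    #{r ∈ piFinset S | P r} = ∑ r ∈ piFinset (Fin.tail S), #{x ∈ S 0 | P (Fin.cons x r)} := by
  have hS := filter_piFinset_eq_map_consEquiv S (fun _ => True)
  simp only [filter_true] at hS
  rw [hS, filter_map, card_map, card_filter, sum_product_right]
  refine sum_congr rfl fun r _ => ?_
  rw [card_filter]
  rfl

end Finset

namespace MvPolynomial

variable {R : Type*} [CommRing R] [IsDomain R] [DecidableEq R]

theorem card_sub_natDegree_finSuccEquiv_le_card_filter_eval_cons_ne_zero {n : ℕ}
    (f : MvPolynomial (Fin (n + 1)) R) {r : Fin n → R}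
    (hr : eval r (finSuccEquiv R n f).leadingCoeff ≠ 0) (T : Finset R) :
    #T - (finSuccEquiv R n f).natDegree ≤ #{x ∈ T | eval (Fin.cons x r) f ≠ 0} := by
  set q := (finSuccEquiv R n f).map (eval r)
  have hdeg : q.natDegree = (finSuccEquiv R n f).natDegree :=
    Polynomial.natDegree_map_of_leadingCoeff_ne_zero _ hr
  have hq : q ≠ 0 := by
    rw [← Polynomial.leadingCoeff_ne_zero, Polynomial.leadingCoeff_map_of_leadingCoeff_ne_zero _ hr]
    exact hr
  simpa only [eval_eq_eval_mv_eval', hdeg] using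
    Polynomial.card_sub_natDegree_le_card_filter_eval_ne_zero hq T

theorem exists_mem_support_prod_card_sub_le_card_filter_eval_ne_zero :
    ∀ {n : ℕ} {f : MvPolynomial (Fin n) R}, f ≠ 0 → ∀ S : Fin n → Finset R,
      ∃ i ∈ f.support, ∏ j, (#(S j) - i j) ≤ #{x ∈ piFinset S | eval x f ≠ 0}
  | 0, f, hf, S => by
    rw [f.eq_C_of_isEmpty] at hf ⊢
    have ha : coeff 0 f ≠ 0 := by simpa using hf
    refine ⟨0, by simp [ha], ?_⟩
    simp [ha]
  | n + 1, f, hf, S => by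
    set q := finSuccEquiv R n f
    have hq : q ≠ 0 := EmbeddingLike.map_ne_zero_iff.2 hf
    obtain ⟨i, hi, hle⟩ :=
      exists_mem_support_prod_card_sub_le_card_filter_eval_ne_zero
        (Polynomial.leadingCoeff_ne_zero.2 hq) (Fin.tail S)
    refine ⟨Finsupp.cons q.natDegree i, ?_, ?_⟩
    · rw [mem_support_iff, ← finSuccEquiv_coeff_coeff]
      exact mem_support_iff.1 hi
    calc ∏ j, (#(S j) - Finsupp.cons q.natDegree i j)
        = (#(S 0) - q.natDegree) * ∏ j, (#(Fin.tail S j) - i j) := by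
          simp only [Fin.prod_univ_succ, Finsupp.cons_zero, Finsupp.cons_succ, Fin.tail]
      _ ≤ (#(S 0) - q.natDegree) * #{r ∈ piFinset (Fin.tail S) | eval r q.leadingCoeff ≠ 0} := by
          gcongr
      _ = ∑ r ∈ piFinset (Fin.tail S) with eval r q.leadingCoeff ≠ 0, (#(S 0) - q.natDegree) := by
          rw [sum_const, smul_eq_mul, mul_comm]
      _ ≤ ∑ r ∈ piFinset (Fin.tail S) with eval r q.leadingCoeff ≠ 0,
            #{x ∈ S 0 | eval (Fin.cons x r) f ≠ 0} :=
          sum_le_sum fun r hr =>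
            card_sub_natDegree_finSuccEquiv_le_card_filter_eval_cons_ne_zero f (mem_filter.1 hr).2 _
      _ ≤ ∑ r ∈ piFinset (Fin.tail S), #{x ∈ S 0 | eval (Fin.cons x r) f ≠ 0} :=
          sum_le_sum_of_subset (filter_subset _ _)
      _ = #{x ∈ piFinset S | eval x f ≠ 0} :=
          (card_filter_piFinset_eq_sum_card_filter_cons S fun x => eval x f ≠ 0).symm

end MvPolynomial

section AffineVarietyCode

variable {F : Type*} [Field F] {m : ℕ} (S : Fin m → Finset F)

noncomputable def evalOnPiFinset : MvPolynomial (Fin m) F →ₗ[F] ({x // x ∈ piFinset S} → F) :=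
  LinearMap.pi fun x => (aeval (x : Fin m → F)).toLinearMap

theorem evalOnPiFinset_apply (f : MvPolynomial (Fin m) F) (x : {x // x ∈ piFinset S}) :
    evalOnPiFinset S f x = eval (x : Fin m → F) f := by
  simp [evalOnPiFinset]

theorem span_eval_monomial_eq_map_restrictSupport (M : Set (Fin m →₀ ℕ)) :
    Submodule.span F ((fun i (x : {x // x ∈ piFinset S}) =>
      eval (x : Fin m → F) (monomial i (1 : F))) '' M) =
      (restrictSupport F M).map (evalOnPiFinset S) := by
  rw [restrictSupport_eq_span, Submodule.map_span, ← Set.image_comp]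
  rfl

theorem hammingNorm_evalOnPiFinset [DecidableEq F] (f : MvPolynomial (Fin m) F) :
    hammingNorm (evalOnPiFinset S f) = #{x ∈ piFinset S | eval x f ≠ 0} := by
  simp only [hammingNorm, evalOnPiFinset_apply]
  rw [univ_eq_attach, card_filter, card_filter,
    sum_attach (piFinset S) fun x => if eval x f ≠ 0 then 1 else 0]

end AffineVarietyCode

theorem affine_variety_code_min_distance_lower_bound_general {F : Type*} [Field F]
    [DecidableEq F] {m : ℕ} (S : Fin m → Finset F) (M : Finset (Fin m →₀ ℕ))
    (hMne : M.Nonempty) :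
    ∀ c ∈ Submodule.span F
        ((fun (i : Fin m →₀ ℕ) (p : {p : Fin m → F // p ∈ Fintype.piFinset S}) =>
            MvPolynomial.eval (p : Fin m → F) (MvPolynomial.monomial i (1 : F))) '' M),
      c ≠ 0 → M.inf' hMne (fun i => ∏ j, ((S j).card - i j)) ≤ hammingNorm c := by
  intro c hc hc0
  rw [span_eval_monomial_eq_map_restrictSupport] at hc
  obtain ⟨f, hfM, rfl⟩ := hc
  have hf : f ≠ 0 := by
    rintro rfl
    exact hc0 (map_zero _)
  obtain ⟨i, hi, hle⟩ := exists_mem_support_prod_card_sub_le_card_filter_eval_ne_zero hf S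
  rw [hammingNorm_evalOnPiFinset]
  exact (inf'_le _ ((mem_restrictSupport_iff F).1 hfM hi)).trans hle

/-- The minimum distance of the affine variety code `E(𝕄, S)` is at least
`min{(s_1 − i_1) ⋯ (s_m − i_m) : X_1^{i_1} ⋯ X_m^{i_m} ∈ 𝕄}`: every nonzero codeword has
Hamming weight at least this number. -/
theorem affine_variety_code_min_distance_lower_bound {F : Type*} [Field F] [Fintype F]
    [DecidableEq F] {m : ℕ} (S : Fin m → Finset F) (M : Finset (Fin m →₀ ℕ))
    (hMne : M.Nonempty) (hM : ∀ i ∈ M, ∀ j, i j < (S j).card) :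
    ∀ c ∈ Submodule.span F
        ((fun (i : Fin m →₀ ℕ) (p : {p : Fin m → F // p ∈ Fintype.piFinset S}) =>
            MvPolynomial.eval (p : Fin m → F) (MvPolynomial.monomial i (1 : F))) '' M),
      c ≠ 0 → M.inf' hMne (fun i => ∏ j, ((S j).card - i j)) ≤ hammingNorm c :=
  affine_variety_code_min_distance_lower_bound_general S M hMne
end

section
/- Let F ∈ F[X_1, X_2] be nonzero with leading monomial X_1^{i_1} X_2^{i_2} with respect to the lexicographic ordering with X_2 ≺ X_1, and let S_1, S_2 be finite sets of sizes s_1, s_2. If s_1(r−1) ≤ i_1 < s_1 r and 0 ≤ i_2 < s_2, then the number of points of S_1 × S_2 at which F has multiplicity at least r is at most s_2·⌊i_1/r⌋ + i_2·(s_1 − ⌊i_1/r⌋). -/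
/-- The `k`-th Hasse derivative of a multivariate polynomial `f`: the coefficient of
`T^k` in `f(X + T)`. -/
noncomputable def hasseDeriv {F : Type*} [CommRing F] {m : ℕ} (k : Fin m →₀ ℕ)
    (f : MvPolynomial (Fin m) F) : MvPolynomial (Fin m) F :=
  MvPolynomial.coeff k
    (MvPolynomial.eval₂ (MvPolynomial.C.comp MvPolynomial.C)
      (fun j => MvPolynomial.X j + MvPolynomial.C (MvPolynomial.X j)) f)

/-- `f` has multiplicity at least `r` at the point `a`: all Hasse derivatives of total
order `< r` vanish at `a`. -/
def HasMultAtLeast {F : Type*} [CommRing F] {m : ℕ} (f : MvPolynomial (Fin m) F)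
    (a : Fin m → F) (r : ℕ) : Prop :=
  ∀ k : Fin m →₀ ℕ, (∑ j, k j) < r → MvPolynomial.eval a (hasseDeriv k f) = 0

/-- The multiplicity of `f` at `a`: the largest `r` such that all Hasse derivatives of `f`
of total order `< r` vanish at `a`. -/
noncomputable def multAt {F : Type*} [CommRing F] {m : ℕ} (f : MvPolynomial (Fin m) F)
    (a : Fin m → F) : ℕ :=
  sSup {r | HasMultAtLeast f a r}

/-!
Fix a row `X₂ = b`. If `f` has multiplicity at least `r` at `(a, b)`, then `(X₁ - a)^r` divides
the restriction `f(X₁, b)`, whose degree is at most `i₁` because `X₁^{i₁} X₂^{i₂}` is the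
lex-leading monomial. So such a row carries at most `⌊i₁/r⌋` points of multiplicity `≥ r`, unless
`f(X₁, b) = 0`, which forces the `X₁^{i₁}`-coefficient `c(X₂)` of `f` to vanish at `b`. Since `c`
is a nonzero polynomial of degree at most `i₂`, at most `i₂` rows are exceptional, and each of
them carries at most `s₁` points.
-/

open Polynomial

section CommRing

variable {F : Type*} [CommRing F]

theorem eval_hasseDeriv {m : ℕ} (k : Fin m →₀ ℕ) (f : MvPolynomial (Fin m) F) (a : Fin m → F) :
    MvPolynomial.eval a (_root_.hasseDeriv k f) =
      MvPolynomial.coeff k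
        (MvPolynomial.eval₂ MvPolynomial.C (fun j => MvPolynomial.X j + MvPolynomial.C (a j)) f) := by
  rw [_root_.hasseDeriv, ← MvPolynomial.coeff_map,
    MvPolynomial.eval₂_comp_left (MvPolynomial.map (MvPolynomial.eval a))]
  congr 2
  · ext c
    simp
  · funext j
    simp

theorem X_sub_C_pow_dvd_iff_X_pow_dvd_taylor (u : F[X]) (a : F) (r : ℕ) :
    (X - C a) ^ r ∣ u ↔ X ^ r ∣ taylor a u := by
  rw [← map_dvd_iff (taylorEquiv a)]
  simp [taylorEquiv]

noncomputable def rowPoly (f : MvPolynomial (Fin 2) F) (b : F) : F[X] :=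
  MvPolynomial.eval₂ C ![X, C b] f

theorem coeff_rowPoly (f : MvPolynomial (Fin 2) F) (b : F) (n : ℕ) :
    (rowPoly f b).coeff n =
      ∑ k ∈ f.support with k 0 = n, MvPolynomial.coeff k f * b ^ k 1 := by
  rw [rowPoly, MvPolynomial.eval₂_eq', finsetSum_coeff, Finset.sum_filter]
  refine Finset.sum_congr rfl fun k _ => ?_
  have : C (MvPolynomial.coeff k f) * ∏ j, ![X, C b] j ^ k j =
      C (MvPolynomial.coeff k f * b ^ k 1) * X ^ k 0 := by
    simp only [Fin.prod_univ_two, Matrix.cons_val_zero, Matrix.cons_val_one, map_mul, map_pow]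
    ring
  rw [this, coeff_C_mul_X_pow]
  exact if_congr eq_comm rfl rfl

theorem coeff_rowPoly_zero (g : MvPolynomial (Fin 2) F) (d : ℕ) :
    (rowPoly g 0).coeff d = MvPolynomial.coeff (Finsupp.single 0 d) g := by
  rw [coeff_rowPoly, Finset.sum_eq_single (Finsupp.single 0 d)]
  · simp
  · intro k hk hne
    have hk1 : k 1 ≠ 0 := by
      intro h
      apply hne
      ext j
      fin_cases j <;> simp_all
    simp [hk1]
  · intro h
    simp_all

theorem taylor_rowPoly (f : MvPolynomial (Fin 2) F) (a b : F) :
    taylor a (rowPoly f b) =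
      rowPoly (MvPolynomial.eval₂ MvPolynomial.C
        (fun j => MvPolynomial.X j + MvPolynomial.C (![a, b] j)) f) 0 := by
  induction f using MvPolynomial.induction_on with
  | C c => simp [rowPoly]
  | add p q hp hq => simp_all [rowPoly]
  | mul_X p j hp =>
    simp only [rowPoly, MvPolynomial.eval₂_mul, MvPolynomial.eval₂_X, taylor_mul] at hp ⊢
    rw [hp]
    fin_cases j <;> simp

theorem X_sub_C_pow_dvd_rowPoly {f : MvPolynomial (Fin 2) F} {a b : F} {r : ℕ}
    (h : HasMultAtLeast f ![a, b] r) : (X - C a) ^ r ∣ rowPoly f b := by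
  rw [X_sub_C_pow_dvd_iff_X_pow_dvd_taylor, X_pow_dvd_iff, taylor_rowPoly]
  intro d hd
  rw [coeff_rowPoly_zero, ← eval_hasseDeriv]
  exact h _ (by simpa [Fin.sum_univ_two] using hd)

-- `f = ∑ₙ X₁ⁿ · (rowCoeff f n)(X₂)`
noncomputable def rowCoeff (f : MvPolynomial (Fin 2) F) (n : ℕ) : F[X] :=
  ∑ k ∈ f.support with k 0 = n, monomial (k 1) (MvPolynomial.coeff k f)

theorem eval_rowCoeff (f : MvPolynomial (Fin 2) F) (n : ℕ) (b : F) :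
    (rowCoeff f n).eval b = (rowPoly f b).coeff n := by
  simp [rowCoeff, coeff_rowPoly, eval_finsetSum]

theorem coeff_rowCoeff (f : MvPolynomial (Fin 2) F) (k : Fin 2 →₀ ℕ) :
    (rowCoeff f (k 0)).coeff (k 1) = MvPolynomial.coeff k f := by
  rw [rowCoeff, finsetSum_coeff, Finset.sum_eq_single k]
  · simp
  · intro l hl hne
    rw [coeff_monomial, if_neg]
    intro h1
    apply hne
    ext j
    fin_cases j
    exacts [(Finset.mem_filter.1 hl).2, h1]
  · intro hk
    simpa using fun h => hk (Finset.mem_filter.2 ⟨MvPolynomial.mem_support_iff.2 h, rfl⟩)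

theorem natDegree_rowCoeff_le {f : MvPolynomial (Fin 2) F} {n m : ℕ}
    (h : ∀ k ∈ f.support, k 0 = n → k 1 ≤ m) : (rowCoeff f n).natDegree ≤ m :=
  natDegree_sum_le_of_forall_le _ _ fun k hk =>
    (natDegree_monomial_le _).trans (h k (Finset.mem_filter.1 hk).1 (Finset.mem_filter.1 hk).2)

theorem natDegree_rowPoly_le {f : MvPolynomial (Fin 2) F} {n : ℕ}
    (h : ∀ k ∈ f.support, k 0 ≤ n) (b : F) : (rowPoly f b).natDegree ≤ n := by
  rw [natDegree_le_iff_coeff_eq_zero]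
  intro N hN
  rw [coeff_rowPoly, Finset.sum_eq_zero]
  intro k hk
  obtain ⟨hkf, rfl⟩ := Finset.mem_filter.1 hk
  exact absurd (h k hkf) (not_le.2 hN)

end CommRing

section Field

variable {F : Type*} [Field F]

theorem mul_card_le_natDegree_of_X_sub_C_pow_dvd {u : F[X]} (hu : u ≠ 0) {t : Finset F}
    {r : ℕ} (h : ∀ x ∈ t, (X - C x) ^ r ∣ u) : r * t.card ≤ u.natDegree := by
  classical
  have hle : r • t.val ≤ u.roots := by
    refine Multiset.le_iff_count.2 fun x => ?_
    rw [Multiset.count_nsmul, count_roots]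
    by_cases hx : x ∈ t
    · rw [Multiset.count_eq_one_of_mem t.nodup hx, mul_one]
      exact (le_rootMultiplicity_iff hu).2 (h x hx)
    · simp [Multiset.count_eq_zero_of_notMem hx]
  calc r * t.card = Multiset.card (r • t.val) := by simp
    _ ≤ Multiset.card u.roots := Multiset.card_le_card hle
    _ ≤ u.natDegree := card_roots' u

theorem card_filter_eval_eq_zero_le [DecidableEq F] {p : F[X]} (hp : p ≠ 0) (s : Finset F) :
    (s.filter fun x => p.eval x = 0).card ≤ p.natDegree :=
  card_le_degree_of_subset_roots fun _ hx =>
    (mem_roots hp).2 (Finset.mem_filter.1 hx).2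

end Field

theorem Finsupp.apply_zero_le_of_toLex_le {k i : Fin 2 →₀ ℕ} (h : toLex k ≤ toLex i) :
    k 0 ≤ i 0 := by
  rcases h.eq_or_lt with he | hlt
  · rw [toLex.injective he]
  · obtain ⟨j, hj, hlt⟩ := Finsupp.lex_def.1 hlt
    fin_cases j
    exacts [hlt.le, (hj 0 (by decide)).le]

theorem Finsupp.apply_one_le_of_toLex_le {k i : Fin 2 →₀ ℕ} (h : toLex k ≤ toLex i)
    (h0 : k 0 = i 0) : k 1 ≤ i 1 := by
  rcases h.eq_or_lt with he | hlt
  · rw [toLex.injective he]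
  · obtain ⟨j, -, hlt⟩ := Finsupp.lex_def.1 hlt
    fin_cases j
    exacts [absurd h0 hlt.ne, hlt.le]

theorem ncard_piFinset_fin_two {α : Type*} [DecidableEq α] (S : Fin 2 → Finset α)
    (P : (Fin 2 → α) → Prop) [DecidablePred P] :
    {p | p ∈ Fintype.piFinset S ∧ P p}.ncard =
      ∑ b ∈ S 1, ((S 0).filter fun a => P ![a, b]).card := by
  rw [← Finset.coe_filter, Set.ncard_coe_finset,
    Finset.card_eq_sum_card_fiberwise (f := fun p => p 1) (t := S 1)]
  · refine Finset.sum_congr rfl fun b hb => ?_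
    have hrow : ∀ p : Fin 2 → α, p 1 = b → ![p 0, b] = p := fun p hp => by
      ext j
      fin_cases j <;> simp [hp]
    refine Finset.card_nbij' (fun p => p 0) (fun a => ![a, b]) ?_ ?_ ?_ ?_
    · intro p hp
      simp only [Finset.mem_coe, Finset.mem_filter, Fintype.mem_piFinset] at hp ⊢
      exact ⟨hp.1.1 0, by rw [hrow p hp.2]; exact hp.1.2⟩
    · intro a ha
      simp only [Finset.mem_coe, Finset.mem_filter, Fintype.mem_piFinset,
        Fin.forall_fin_two] at ha ⊢
      exact ⟨⟨⟨ha.1, hb⟩, ha.2⟩, rfl⟩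
    · intro p hp
      exact hrow p (Finset.mem_filter.1 hp).2
    · intro a _
      rfl
  · intro p hp
    exact Fintype.mem_piFinset.1 (Finset.mem_filter.1 hp).1 1

theorem Finset.sum_le_card_mul_add_of_card_filter_le {ι : Type*} (s : Finset ι) (P : ι → Prop)
    [DecidablePred P] {g : ι → ℕ} {q A e : ℕ} (hA : ∀ x ∈ s, g x ≤ A)
    (hq : ∀ x ∈ s, ¬P x → g x ≤ q) (he : (s.filter P).card ≤ e) :
    ∑ x ∈ s, g x ≤ s.card * q + e * (A - q) := by
  calc ∑ x ∈ s, g x ≤ ∑ x ∈ s, (q + if P x then A - q else 0) := by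
        refine Finset.sum_le_sum fun x hx => ?_
        split_ifs with hP
        · have := hA x hx
          omega
        · simpa using hq x hx hP
    _ = s.card * q + (s.filter P).card * (A - q) := by
        rw [Finset.sum_add_distrib, Finset.sum_const, Finset.sum_ite, Finset.sum_const,
          Finset.sum_const_zero]
        simp
    _ ≤ s.card * q + e * (A - q) := by gcongr

theorem two_var_closed_formula_C4_general {F : Type*} [Field F]
    (f : MvPolynomial (Fin 2) F) (i : Fin 2 →₀ ℕ)
    (hcoeff : MvPolynomial.coeff i f ≠ 0)
    (hlead : ∀ j ∈ f.support, toLex j ≤ toLex i)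
    (S : Fin 2 → Finset F) (r : ℕ) (hr : 1 ≤ r) :
    {p : Fin 2 → F | p ∈ Fintype.piFinset S ∧ HasMultAtLeast f p r}.ncard ≤
      (S 1).card * (i 0 / r) + i 1 * ((S 0).card - i 0 / r) := by
  classical
  have hdeg₁ : ∀ k ∈ f.support, k 0 ≤ i 0 := fun k hk =>
    Finsupp.apply_zero_le_of_toLex_le (hlead k hk)
  have hdeg₂ : ∀ k ∈ f.support, k 0 = i 0 → k 1 ≤ i 1 := fun k hk =>
    Finsupp.apply_one_le_of_toLex_le (hlead k hk)
  have hc : rowCoeff f (i 0) ≠ 0 := fun h => hcoeff (by rw [← coeff_rowCoeff, h, coeff_zero])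
  rw [ncard_piFinset_fin_two]
  refine Finset.sum_le_card_mul_add_of_card_filter_le (S 1)
    (fun b => (rowCoeff f (i 0)).eval b = 0) (fun b _ => Finset.card_filter_le _ _)
    (fun b _ hb => ?_) ((card_filter_eval_eq_zero_le hc _).trans (natDegree_rowCoeff_le hdeg₂))
  have hrow : rowPoly f b ≠ 0 := fun h => hb (by rw [eval_rowCoeff, h, coeff_zero])
  rw [Nat.le_div_iff_mul_le hr, mul_comm]
  exact (mul_card_le_natDegree_of_X_sub_C_pow_dvd hrow fun a ha =>
    X_sub_C_pow_dvd_rowPoly (Finset.mem_filter.1 ha).2).trans (natDegree_rowPoly_le hdeg₁ b)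

/-- **case (C.4).** Let `f ∈ F[X_1,X_2]` be nonzero with leading monomial
`X_1^{i_1} X_2^{i_2}` with respect to the lexicographic ordering with `X_2 ≺ X_1`. If
`s_1(r−1) ≤ i_1 < s_1 r` and `i_2 < s_2`, then the number of points of `S_1 × S_2` at which
`f` has multiplicity at least `r` is at most `s_2 ⌊i_1/r⌋ + i_2 (s_1 − ⌊i_1/r⌋)`. -/
theorem two_var_closed_formula_C4 {F : Type*} [Field F]
    (f : MvPolynomial (Fin 2) F) (hf : f ≠ 0) (i : Fin 2 →₀ ℕ)
    (hcoeff : MvPolynomial.coeff i f ≠ 0)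
    (hlead : ∀ j ∈ f.support, toLex j ≤ toLex i)
    (S : Fin 2 → Finset F) (r : ℕ) (hr : 1 ≤ r)
    (h1 : (S 0).card * (r - 1) ≤ i 0) (h2 : i 0 < (S 0).card * r)
    (h3 : i 1 < (S 1).card) :
    {p : Fin 2 → F | p ∈ Fintype.piFinset S ∧ HasMultAtLeast f p r}.ncard ≤
      (S 1).card * (i 0 / r) + i 1 * ((S 0).card - i 0 / r) :=
  two_var_closed_formula_C4_general f i hcoeff hlead S r hr
end

section
/- Let F ∈ F[X_1, X_2] be nonzero with leading monomial X_1^{i_1} X_2^{i_2} with respect to lex order with X_2 ≺ X_1, let |S_1| = s_1, |S_2| = s_2, and let 1 ≤ k ≤ r−1. If (r−k−1)s_1 ≤ i_1 < (r−k)·(r/(r+1))·s_1 and 0 ≤ i_2 < (k+1)s_2, then the number of points of S_1 × S_2 at which F has multiplicity at least r is at most s_2·(i_1/r) + (i_2/(k+1))·(s_1 − i_1/r). -/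
/-!
View `f` as a polynomial in `X 0` over `F[X 1]`. Since `X 0 ^ i 0 * X 1 ^ i 1` is the
lex-leading monomial, the coefficient `c ∈ F[X 1]` of `X 0 ^ i 0` is nonzero of degree `≤ i 1`.
Fix a column `X 1 = b` and let `j` be the multiplicity of `b` as a root of `c`. Restricting the
`j`-th Hasse derivative of `f` in `X 1` to the column gives a univariate polynomial of degree
`≤ i 0` whose coefficient of `X ^ i 0` is `(∂ʲ c)(b) ≠ 0`, and which vanishes to order `r - j`
at every point of the column where `f` has multiplicity `≥ r`. Hence the column contains at most
`i 0 / (r - j)` such points, and also at most `|S 0|`; the hypothesis on `i 0` turns this into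
the linear bound `i 0 / r + j / (k + 1) * (|S 0| - i 0 / r)`. Summing over the columns, with
`∑ j ≤ deg c ≤ i 1`, gives the claim.
-/

open MvPolynomial Finset

section HasseDeriv

variable {F : Type*} [CommRing F] {m : ℕ}

theorem hasseDeriv_add (k : Fin m →₀ ℕ) (f g : MvPolynomial (Fin m) F) :
    hasseDeriv k (f + g) = hasseDeriv k f + hasseDeriv k g := by
  simp only [hasseDeriv, eval₂_add, coeff_add]

theorem hasseDeriv_monomial (k n : Fin m →₀ ℕ) (c : F) :
    hasseDeriv k (monomial n c) = (∏ j, (n j).choose (k j)) • monomial (n - k) c := by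
  classical
  have hbinom : ∀ j, ((X j + C (X j)) ^ n j : MvPolynomial (Fin m) (MvPolynomial (Fin m) F)) =
      ∑ p ∈ range (n j + 1), monomial (Finsupp.single j p)
        (((n j).choose p : MvPolynomial (Fin m) F) * X j ^ (n j - p)) := by
    intro j
    rw [add_pow]
    refine sum_congr rfl fun p _ => ?_
    rw [X_pow_eq_monomial, ← C_pow, ← map_natCast C, mul_assoc, ← map_mul, mul_comm,
      C_mul_monomial, mul_one, mul_comm (X j ^ _)]
  have hsingle : ∀ x : Fin m → ℕ, (∑ j, Finsupp.single j (x j) = k) ↔ ⇑k = x := by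
    intro x
    rw [← Finsupp.equivFunOnFinite_symm_eq_sum, Equiv.symm_apply_eq, eq_comm]
    rfl
  unfold hasseDeriv
  rw [eval₂_monomial, Finsupp.prod_fintype _ _ (fun _ => pow_zero _)]
  simp only [RingHom.comp_apply, hbinom, prod_univ_sum, ← monomial_sum_prod, coeff_C_mul,
    coeff_sum, coeff_monomial, hsingle, sum_ite_eq, Fintype.mem_piFinset, mem_range,
    Nat.lt_succ_iff]
  rw [monomial_eq, Finsupp.prod_fintype _ _ (fun _ => pow_zero _), nsmul_eq_mul, Nat.cast_prod]
  split_ifs with hkn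
  · simp only [prod_mul_distrib, Finsupp.tsub_apply]
    ring
  · obtain ⟨j, hj⟩ := not_forall.mp hkn
    rw [prod_eq_zero (mem_univ j) (by simp [Nat.choose_eq_zero_of_lt (not_le.mp hj)]),
      zero_mul, mul_zero]

theorem coeff_hasseDeriv (k d : Fin m →₀ ℕ) (f : MvPolynomial (Fin m) F) :
    coeff d (hasseDeriv k f) = (∏ j, (d j + k j).choose (k j)) • coeff (d + k) f := by
  induction f using MvPolynomial.induction_on' with
  | add p q hp hq => rw [hasseDeriv_add, coeff_add, hp, hq, coeff_add, smul_add]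
  | monomial n c =>
    rw [hasseDeriv_monomial, coeff_smul, coeff_monomial, coeff_monomial]
    by_cases hn : n = d + k
    · subst hn
      simp [add_tsub_cancel_right]
    · rw [if_neg hn, smul_zero]
      split_ifs with hd
      · have hkn : ¬ k ≤ n := fun hkn => hn (by rw [← hd, tsub_add_cancel_of_le hkn])
        obtain ⟨j, hj⟩ := not_forall.mp hkn
        rw [prod_eq_zero (mem_univ j) (Nat.choose_eq_zero_of_lt (not_le.mp hj)), zero_smul]
      · rw [smul_zero]

theorem coeff_hasseDeriv_single (j : Fin m) (s : ℕ) (d : Fin m →₀ ℕ)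
    (f : MvPolynomial (Fin m) F) :
    coeff d (hasseDeriv (Finsupp.single j s) f) =
      (d j + s).choose s • coeff (d + Finsupp.single j s) f := by
  classical
  rw [coeff_hasseDeriv, prod_eq_single_of_mem j (mem_univ j) fun l _ hl => by
    rw [Finsupp.single_eq_of_ne hl, Nat.choose_zero_right], Finsupp.single_eq_same]

theorem mem_support_of_mem_support_hasseDeriv {k n : Fin m →₀ ℕ} {f : MvPolynomial (Fin m) F}
    (hn : n ∈ (hasseDeriv k f).support) : n + k ∈ f.support := by
  rw [mem_support_iff, coeff_hasseDeriv] at hn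
  exact mem_support_iff.mpr fun h => hn (by rw [h, smul_zero])

theorem hasseDeriv_hasseDeriv (k l : Fin m →₀ ℕ) (f : MvPolynomial (Fin m) F) :
    hasseDeriv k (hasseDeriv l f) = (∏ j, (k j + l j).choose (k j)) • hasseDeriv (k + l) f := by
  ext d
  have hchoose : ∀ a b c : ℕ,
      (a + b).choose b * (a + b + c).choose c =
        (b + c).choose b * (a + (b + c)).choose (b + c) := by
    intro a b c
    have h := Nat.choose_mul (n := a + b + c) (k := b + c) (s := c) le_add_self
    rw [Nat.add_sub_cancel, Nat.add_sub_cancel] at h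
    rw [← add_assoc, Nat.choose_symm_add, mul_comm, ← h, mul_comm]
  simp only [coeff_smul, coeff_hasseDeriv, smul_smul, Finsupp.add_apply, ← prod_mul_distrib,
    hchoose, ← add_assoc]

theorem HasMultAtLeast.eval_hasseDeriv_hasseDeriv {f : MvPolynomial (Fin m) F}
    {p : Fin m → F} {r : ℕ} (h : HasMultAtLeast f p r) {k l : Fin m →₀ ℕ}
    (hkl : ∑ j, (k j + l j) < r) : eval p (hasseDeriv k (hasseDeriv l f)) = 0 := by
  rw [hasseDeriv_hasseDeriv, map_nsmul, h _ hkl, smul_zero]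

end HasseDeriv

namespace Polynomial

variable {R : Type*} [CommRing R]

theorem hasseDeriv_map {S : Type*} [CommRing S] (φ : R →+* S) (k : ℕ) (p : R[X]) :
    hasseDeriv k (p.map φ) = (hasseDeriv k p).map φ := by
  ext n
  simp only [hasseDeriv_coeff, coeff_map, map_mul, map_natCast]

theorem eval_hasseDeriv_rootMultiplicity_ne_zero {p : R[X]} (hp : p ≠ 0) (a : R) :
    (hasseDeriv (p.rootMultiplicity a) p).eval a ≠ 0 := by
  rw [← taylor_coeff, rootMultiplicity_eq_natTrailingDegree, ← taylor_apply]
  exact coeff_natTrailingDegree_ne_zero.mpr ((taylor_eq_zero a p).not.mpr hp)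

theorem le_rootMultiplicity_of_eval_hasseDeriv_eq_zero {p : R[X]} (hp : p ≠ 0) {a : R} {s : ℕ}
    (h : ∀ v < s, (hasseDeriv v p).eval a = 0) : s ≤ p.rootMultiplicity a := by
  rw [rootMultiplicity_eq_natTrailingDegree, ← taylor_apply]
  exact le_natTrailingDegree ((taylor_eq_zero a p).not.mpr hp) fun v hv => by
    rw [taylor_coeff, h v hv]

theorem sum_rootMultiplicity_le_natDegree [IsDomain R] (p : R[X]) (T : Finset R) :
    ∑ a ∈ T, p.rootMultiplicity a ≤ p.natDegree := by
  classical
  calc ∑ a ∈ T, p.rootMultiplicity a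
      ≤ ∑ a ∈ T ∪ p.roots.toFinset, p.roots.count a := by
        simp only [count_roots]
        exact Finset.sum_le_sum_of_subset Finset.subset_union_left
    _ = Multiset.card p.roots := Multiset.sum_count_eq_card fun a ha =>
        Finset.mem_union_right _ (Multiset.mem_toFinset.mpr ha)
    _ ≤ p.natDegree := card_roots' p

end Polynomial

theorem Finsupp.toLex_le_toLex_fin_two {N : Type*} [Zero N] [LinearOrder N]
    {m n : Fin 2 →₀ N} : toLex m ≤ toLex n ↔ m 0 < n 0 ∨ m 0 = n 0 ∧ m 1 ≤ n 1 := by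
  rw [le_iff_lt_or_eq, Finsupp.Lex.lt_iff, toLex_inj, Finsupp.ext_iff, Fin.exists_fin_two,
    le_iff_lt_or_eq (a := m 1)]
  simp only [ofLex_toLex, not_lt_zero, IsEmpty.forall_iff, Fin.lt_one_iff, forall_eq, true_and,
    Fin.forall_fin_two]
  tauto

theorem Finset.ncard_filter_piFinset_fin_two {α : Type*} (S : Fin 2 → Finset α)
    (P : (Fin 2 → α) → Prop) [DecidablePred P] :
    {p : Fin 2 → α | p ∈ Fintype.piFinset S ∧ P p}.ncard =
      ∑ b ∈ S 1, #{a ∈ S 0 | P ![a, b]} := by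
  have heta : ∀ p : Fin 2 → α, ![p 0, p 1] = p := fun p =>
    funext fun j => by fin_cases j <;> rfl
  rw [← Finset.coe_filter, Set.ncard_coe_finset]
  calc #{p ∈ Fintype.piFinset S | P p} = #{ab ∈ S 0 ×ˢ S 1 | P ![ab.1, ab.2]} := by
        apply Finset.card_nbij' (fun p => (p 0, p 1)) (fun ab => ![ab.1, ab.2])
        · intro p hp
          simp_all [Fin.forall_fin_two]
        · intro ab hab
          simp_all [Fin.forall_fin_two]
        · intro p _
          exact heta p
        · intro ab _
          rfl
    _ = ∑ b ∈ S 1, #{a ∈ S 0 | P ![a, b]} := by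
        simp only [Finset.card_filter, Finset.sum_product_right]

section FinTwo

variable {F : Type*} [CommRing F]

noncomputable def toPolyPoly : MvPolynomial (Fin 2) F →+* Polynomial (Polynomial F) :=
  eval₂Hom (Polynomial.C.comp Polynomial.C) ![Polynomial.X, Polynomial.C Polynomial.X]

theorem toPolyPoly_monomial (n : Fin 2 →₀ ℕ) (c : F) :
    toPolyPoly (monomial n c) = Polynomial.monomial (n 0) (Polynomial.monomial (n 1) c) := by
  rw [toPolyPoly, eval₂Hom_monomial, Finsupp.prod_fintype _ _ fun _ => pow_zero _,
    Fin.prod_univ_two, ← Polynomial.C_mul_X_pow_eq_monomial,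
    ← Polynomial.C_mul_X_pow_eq_monomial]
  simp only [RingHom.comp_apply, Matrix.cons_val_zero, Matrix.cons_val_one, map_mul, map_pow]
  ring

theorem coeff_coeff_toPolyPoly (g : MvPolynomial (Fin 2) F) (t u : ℕ) :
    ((toPolyPoly g).coeff t).coeff u = coeff (Finsupp.single 0 t + Finsupp.single 1 u) g := by
  induction g using MvPolynomial.induction_on' with
  | add p q hp hq => simp only [map_add, Polynomial.coeff_add, hp, hq, coeff_add]
  | monomial n c =>
    have hn : n = Finsupp.single 0 t + Finsupp.single 1 u ↔ n 0 = t ∧ n 1 = u := by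
      simp [Finsupp.ext_iff, Fin.forall_fin_two]
    rw [toPolyPoly_monomial, coeff_monomial, Polynomial.coeff_monomial]
    by_cases h0 : n 0 = t <;> by_cases h1 : n 1 = u <;> simp [hn, h0, h1, Polynomial.coeff_monomial]

theorem natDegree_toPolyPoly_le (g : MvPolynomial (Fin 2) F) {D : ℕ}
    (hD : ∀ n ∈ g.support, n 0 ≤ D) : (toPolyPoly g).natDegree ≤ D :=
  Polynomial.natDegree_le_iff_coeff_eq_zero.mpr fun t ht => by
    ext u
    rw [coeff_coeff_toPolyPoly, Polynomial.coeff_zero, ← notMem_support_iff]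
    intro hmem
    have : t ≤ D := by simpa using hD _ hmem
    omega

theorem coeff_coeff_toPolyPoly' (g : MvPolynomial (Fin 2) F) (n : Fin 2 →₀ ℕ) :
    ((toPolyPoly g).coeff (n 0)).coeff (n 1) = coeff n g := by
  rw [coeff_coeff_toPolyPoly]
  congr
  ext j
  fin_cases j <;> simp

theorem natDegree_coeff_toPolyPoly_le {g : MvPolynomial (Fin 2) F} {i : Fin 2 →₀ ℕ}
    (hlead : ∀ n ∈ g.support, toLex n ≤ toLex i) :
    ((toPolyPoly g).coeff (i 0)).natDegree ≤ i 1 :=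
  Polynomial.natDegree_le_iff_coeff_eq_zero.mpr fun u hu => by
    rw [coeff_coeff_toPolyPoly, ← notMem_support_iff]
    intro hmem
    have : u ≤ i 1 := by simpa using Finsupp.toLex_le_toLex_fin_two.mp (hlead _ hmem)
    omega

theorem toPolyPoly_hasseDeriv_single_zero (s : ℕ) (g : MvPolynomial (Fin 2) F) :
    toPolyPoly (hasseDeriv (Finsupp.single 0 s) g) = Polynomial.hasseDeriv s (toPolyPoly g) := by
  ext t u
  rw [coeff_coeff_toPolyPoly, coeff_hasseDeriv_single, Polynomial.hasseDeriv_coeff,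
    Polynomial.coeff_natCast_mul, coeff_coeff_toPolyPoly, Finsupp.single_add, add_right_comm,
    nsmul_eq_mul]
  simp

theorem coeff_toPolyPoly_hasseDeriv_single_one (j : ℕ) (g : MvPolynomial (Fin 2) F) (t : ℕ) :
    (toPolyPoly (hasseDeriv (Finsupp.single 1 j) g)).coeff t =
      Polynomial.hasseDeriv j ((toPolyPoly g).coeff t) := by
  ext u
  rw [coeff_coeff_toPolyPoly, coeff_hasseDeriv_single, Polynomial.hasseDeriv_coeff,
    coeff_coeff_toPolyPoly, Finsupp.single_add, add_assoc, nsmul_eq_mul]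
  simp

theorem eval_map_toPolyPoly (a b : F) (g : MvPolynomial (Fin 2) F) :
    ((toPolyPoly g).map (Polynomial.evalRingHom b)).eval a = eval ![a, b] g := by
  have : (Polynomial.evalRingHom a).comp ((Polynomial.mapRingHom (Polynomial.evalRingHom b)).comp
      toPolyPoly) = eval ![a, b] := by
    ext j
    · simp [toPolyPoly]
    · fin_cases j <;> simp [toPolyPoly]
  exact DFunLike.congr_fun this g

end FinTwo

theorem card_mul_sub_rootMultiplicity_le {F : Type*} [CommRing F] [IsDomain F]
    {f : MvPolynomial (Fin 2) F} {D r : ℕ} (hD : ∀ n ∈ f.support, n 0 ≤ D)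
    (hc : (toPolyPoly f).coeff D ≠ 0) (b : F) (T : Finset F)
    (hT : ∀ a ∈ T, HasMultAtLeast f ![a, b] r) :
    #T * (r - ((toPolyPoly f).coeff D).rootMultiplicity b) ≤ D := by
  set j := ((toPolyPoly f).coeff D).rootMultiplicity b
  set q := (toPolyPoly (hasseDeriv (Finsupp.single 1 j) f)).map (Polynomial.evalRingHom b)
  have hq : q ≠ 0 := by
    have hq_top : q.coeff D = (Polynomial.hasseDeriv j ((toPolyPoly f).coeff D)).eval b := by
      rw [Polynomial.coeff_map, coeff_toPolyPoly_hasseDeriv_single_one]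
      rfl
    intro h
    exact Polynomial.eval_hasseDeriv_rootMultiplicity_ne_zero hc b
      (by rw [← hq_top, h, Polynomial.coeff_zero])
  have hq_deg : q.natDegree ≤ D := Polynomial.natDegree_map_le.trans <|
    natDegree_toPolyPoly_le _ fun n hn => by
      simpa using hD _ (mem_support_of_mem_support_hasseDeriv hn)
  have hroot : ∀ a ∈ T, r - j ≤ q.rootMultiplicity a := fun a ha =>
    Polynomial.le_rootMultiplicity_of_eval_hasseDeriv_eq_zero hq fun v hv => by
      rw [Polynomial.hasseDeriv_map, ← toPolyPoly_hasseDeriv_single_zero, eval_map_toPolyPoly]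
      exact (hT a ha).eval_hasseDeriv_hasseDeriv
        (by simpa [Fin.sum_univ_two] using (by omega : v + j < r))
  calc #T * (r - j) = ∑ _a ∈ T, (r - j) := by rw [sum_const, smul_eq_mul]
    _ ≤ ∑ a ∈ T, q.rootMultiplicity a := sum_le_sum hroot
    _ ≤ q.natDegree := Polynomial.sum_rootMultiplicity_le_natDegree q T
    _ ≤ D := hq_deg

theorem div_le_of_lt_sub_mul_div_mul {i s r k : ℕ}
    (hi : (i : ℚ) < ((r : ℚ) - k) * ((r : ℚ) / (r + 1)) * s) : (i : ℚ) / r ≤ s := by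
  rcases Nat.eq_zero_or_pos r with rfl | hr
  · simp
  have hq : (r : ℚ) / (r + 1) ≤ 1 := div_le_one_of_le₀ (by linarith) (by positivity)
  rw [div_le_iff₀ (by positivity)]
  nlinarith [mul_nonneg (mul_nonneg (Nat.cast_nonneg k) (by positivity : (0 : ℚ) ≤ r / (r + 1)))
    (Nat.cast_nonneg s : (0 : ℚ) ≤ s),
    mul_nonneg (by positivity : (0 : ℚ) ≤ r * s) (sub_nonneg.mpr hq)]

theorem le_div_add_div_mul_sub_div {A s i m r k : ℕ}
    (hi : (i : ℚ) < ((r : ℚ) - k) * ((r : ℚ) / (r + 1)) * s) (hA : A ≤ s)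
    (hAm : A * (r - m) ≤ i) :
    (A : ℚ) ≤ i / r + m / (k + 1) * (s - i / r) := by
  have hkr : (k : ℚ) < r := by
    by_contra! h
    have : ((r : ℚ) - k) * ((r : ℚ) / (r + 1)) * s ≤ 0 :=
      mul_nonpos_of_nonpos_of_nonneg
        (mul_nonpos_of_nonpos_of_nonneg (by linarith) (by positivity)) (by positivity)
    linarith [(Nat.cast_nonneg i : (0 : ℚ) ≤ i)]
  have hr : (0 : ℚ) < r := lt_of_le_of_lt (Nat.cast_nonneg k) hkr
  have his : (i : ℚ) / r ≤ s := div_le_of_lt_sub_mul_div_mul hi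
  rcases le_or_gt m k with hmk | hkm
  · -- `m ↦ i / (r - m)` is convex and the right-hand side is linear in `m`; they agree at
    -- `m = 0`, and `hi` is exactly the inequality at `m = k`.
    have hmk' : (m : ℚ) ≤ k := by exact_mod_cast hmk
    have hAm' : (A : ℚ) * (r - m) ≤ i := by
      have : ((A * (r - m) : ℕ) : ℚ) ≤ i := by exact_mod_cast hAm
      rwa [Nat.cast_mul, Nat.cast_sub (by exact_mod_cast (by linarith : (m : ℚ) ≤ r))] at this
    have hrm : (0 : ℚ) < r - m := by linarith
    have key : (i : ℚ) * (r + 1) < (r - k) * r * s := by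
      have := mul_lt_mul_of_pos_right hi (by positivity : (0 : ℚ) < r + 1)
      rwa [show ((r : ℚ) - k) * (r / (r + 1)) * s * (r + 1) = (r - k) * r * s by field_simp]
        at this
    have hik : (i : ℚ) * (k + 1) ≤ (r - m) * (r * s - i) := by
      nlinarith [mul_le_mul_of_nonneg_right (show (r : ℚ) - k ≤ r - m by linarith)
        (sub_nonneg.mpr ((div_le_iff₀ hr).mp his))]
    rw [show (i : ℚ) / r + m / (k + 1) * (s - i / r) =
        (i * (k + 1) + m * (r * s - i)) / (r * (k + 1)) by field_simp,
      le_div_iff₀ (by positivity)]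
    refine le_of_mul_le_mul_right ?_ hrm
    nlinarith [mul_le_mul_of_nonneg_right hAm' (by positivity : (0 : ℚ) ≤ r * (k + 1)),
      mul_le_mul_of_nonneg_left hik (Nat.cast_nonneg m : (0 : ℚ) ≤ m)]
  · have hA' : (A : ℚ) ≤ s := by exact_mod_cast hA
    have hm : (1 : ℚ) ≤ m / (k + 1) := by
      rw [one_le_div (by positivity)]
      exact_mod_cast hkm
    nlinarith [mul_le_mul_of_nonneg_right hm (sub_nonneg.mpr his)]

theorem two_var_closed_formula_C3_general {F : Type*} [Field F]
    (f : MvPolynomial (Fin 2) F) (i : Fin 2 →₀ ℕ)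
    (hcoeff : MvPolynomial.coeff i f ≠ 0)
    (hlead : ∀ j ∈ f.support, toLex j ≤ toLex i)
    (S : Fin 2 → Finset F) (r k : ℕ)
    (h2 : (i 0 : ℚ) < ((r : ℚ) - k) * ((r : ℚ) / (r + 1)) * (S 0).card) :
    ({p : Fin 2 → F | p ∈ Fintype.piFinset S ∧ HasMultAtLeast f p r}.ncard : ℚ) ≤
      ((S 1).card : ℚ) * ((i 0 : ℚ) / r) +
        ((i 1 : ℚ) / ((k : ℚ) + 1)) * (((S 0).card : ℚ) - (i 0 : ℚ) / r) := by
  classical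
  have hdeg : ∀ n ∈ f.support, n 0 ≤ i 0 := fun n hn =>
    (Finsupp.toLex_le_toLex_fin_two.mp (hlead n hn)).elim le_of_lt fun h => h.1.le
  have hc : (toPolyPoly f).coeff (i 0) ≠ 0 := fun h =>
    hcoeff (by rw [← coeff_coeff_toPolyPoly', h, Polynomial.coeff_zero])
  set c := (toPolyPoly f).coeff (i 0)
  have hcol : ∀ b ∈ S 1, (#{a ∈ S 0 | HasMultAtLeast f ![a, b] r} : ℚ) ≤
      i 0 / r + c.rootMultiplicity b / (k + 1) * ((S 0).card - i 0 / r) := fun b _ =>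
    le_div_add_div_mul_sub_div h2 (card_filter_le _ _) <|
      card_mul_sub_rootMultiplicity_le hdeg hc b _ fun a ha => (mem_filter.mp ha).2
  have hroots : (∑ b ∈ S 1, c.rootMultiplicity b : ℚ) ≤ i 1 := by
    exact_mod_cast (Polynomial.sum_rootMultiplicity_le_natDegree c (S 1)).trans
      (natDegree_coeff_toPolyPoly_le hlead)
  have hslack : (0 : ℚ) ≤ (S 0).card - i 0 / r :=
    sub_nonneg.mpr (div_le_of_lt_sub_mul_div_mul h2)
  rw [Finset.ncard_filter_piFinset_fin_two]
  push_cast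
  calc ∑ b ∈ S 1, (#{a ∈ S 0 | HasMultAtLeast f ![a, b] r} : ℚ)
      ≤ ∑ b ∈ S 1, ((i 0 : ℚ) / r + c.rootMultiplicity b / (k + 1) * ((S 0).card - i 0 / r)) :=
        sum_le_sum hcol
    _ = (S 1).card * (i 0 / r) +
          (∑ b ∈ S 1, (c.rootMultiplicity b : ℚ)) / (k + 1) * ((S 0).card - i 0 / r) := by
        rw [sum_add_distrib, sum_const, nsmul_eq_mul, ← sum_mul, ← sum_div]
    _ ≤ (S 1).card * (i 0 / r) + i 1 / (k + 1) * ((S 0).card - i 0 / r) := by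
        gcongr

/-- **case (C.3).** Let `f ∈ F[X_1,X_2]` be nonzero with leading monomial
`X_1^{i_1} X_2^{i_2}` with respect to the lexicographic ordering with `X_2 ≺ X_1`, and let
`1 ≤ k ≤ r−1`. If `(r−k−1)·s_1 ≤ i_1 < (r−k)·(r/(r+1))·s_1` and `i_2 < (k+1)·s_2`, then the
number of points of `S_1 × S_2` at which `f` has multiplicity at least `r` is at most
`s_2·(i_1/r) + (i_2/(k+1))·(s_1 − i_1/r)` (as rational numbers). -/
theorem two_var_closed_formula_C3 {F : Type*} [Field F]
    (f : MvPolynomial (Fin 2) F) (hf : f ≠ 0) (i : Fin 2 →₀ ℕ)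
    (hcoeff : MvPolynomial.coeff i f ≠ 0)
    (hlead : ∀ j ∈ f.support, toLex j ≤ toLex i)
    (S : Fin 2 → Finset F) (r k : ℕ) (hk1 : 1 ≤ k) (hk2 : k ≤ r - 1)
    (h1 : ((r : ℚ) - k - 1) * (S 0).card ≤ (i 0 : ℚ))
    (h2 : (i 0 : ℚ) < ((r : ℚ) - k) * ((r : ℚ) / (r + 1)) * (S 0).card)
    (h3 : (i 1 : ℚ) < ((k : ℚ) + 1) * (S 1).card) :
    ({p : Fin 2 → F | p ∈ Fintype.piFinset S ∧ HasMultAtLeast f p r}.ncard : ℚ) ≤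
      ((S 1).card : ℚ) * ((i 0 : ℚ) / r) +
        ((i 1 : ℚ) / ((k : ℚ) + 1)) * (((S 0).card : ℚ) - (i 0 : ℚ) / r) :=
  two_var_closed_formula_C3_general f i hcoeff hlead S r k h2
end

section
/- For nonzero polynomials F, G ∈ F[X_1,...,X_m] and a point a ∈ F^m, mult(F·G, a) = mult(F, a) + mult(G, a). -/
open MvPolynomial

namespace MvPolynomial

variable {σ R : Type*} [CommRing R]

noncomputable def taylor (a : σ → R) : MvPolynomial σ R →ₐ[R] MvPolynomial σ R :=
  aeval fun j => X j + C (a j)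

theorem taylor_neg_taylor (a : σ → R) (f : MvPolynomial σ R) :
    taylor (-a) (taylor a f) = f := by
  rw [← AlgHom.comp_apply, ← AlgHom.id_apply (R := R) f]
  congr 1
  refine algHom_ext fun j => ?_
  simp [taylor]

theorem taylor_injective (a : σ → R) : Function.Injective (taylor a) :=
  Function.LeftInverse.injective (taylor_neg_taylor a)

end MvPolynomial

section Multiplicity

variable {F : Type*} [CommRing F] {m : ℕ}

theorem eval_hasseDeriv_s18 (a : Fin m → F) (f : MvPolynomial (Fin m) F) (k : Fin m →₀ ℕ) :
    eval a (hasseDeriv k f) = coeff k (taylor a f) := by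
  have evalCoeffs_comp_expand :
      (map (eval a)).comp (eval₂Hom (C.comp C) fun j => X j + C (X j)) =
        (taylor a : MvPolynomial (Fin m) F →ₐ[F] _).toRingHom := by
    refine ringHom_ext (fun r => ?_) fun j => ?_ <;> simp [taylor]
  rw [hasseDeriv, ← coeff_map]
  exact congr(coeff k ($evalCoeffs_comp_expand f))

theorem hasMultAtLeast_iff_le_order (f : MvPolynomial (Fin m) F) (a : Fin m → F) (r : ℕ) :
    HasMultAtLeast f a r ↔
      (r : ℕ∞) ≤ MvPowerSeries.order (taylor a f : MvPowerSeries (Fin m) F) := by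
  simp only [HasMultAtLeast, eval_hasseDeriv_s18, ← Finsupp.degree_eq_sum]
  refine ⟨fun h => MvPowerSeries.nat_le_order fun k hk => ?_, fun h k hk => ?_⟩
  · rw [coeff_coe]; exact h k hk
  · rw [← coeff_coe]
    exact MvPowerSeries.coeff_of_lt_order (lt_of_lt_of_le (by exact_mod_cast hk) h)

theorem multAt_eq_of_order_eq {f : MvPolynomial (Fin m) F} {a : Fin m → F} {n : ℕ}
    (h : MvPowerSeries.order (taylor a f : MvPowerSeries (Fin m) F) = n) :
    multAt f a = n := by
  have : {r | HasMultAtLeast f a r} = Set.Iic n := by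
    ext r; simp [hasMultAtLeast_iff_le_order, h]
  rw [multAt, this, csSup_Iic]

theorem exists_order_taylor_eq {f : MvPolynomial (Fin m) F} (hf : f ≠ 0) (a : Fin m → F) :
    ∃ n : ℕ, MvPowerSeries.order (taylor a f : MvPowerSeries (Fin m) F) = n := by
  refine (ENat.ne_top_iff_exists.mp fun h => hf ?_).imp fun n hn => hn.symm
  rw [MvPowerSeries.order_eq_top_iff, coe_eq_zero_iff] at h
  exact taylor_injective a (h.trans (map_zero _).symm)

end Multiplicity

/-- Multiplicities are additive under multiplication: for nonzero
polynomials `f, g` over a field and any point `a`,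
`mult(f·g, a) = mult(f, a) + mult(g, a)`. -/
theorem multAt_mul {F : Type*} [Field F] {m : ℕ}
    (f g : MvPolynomial (Fin m) F) (hf : f ≠ 0) (hg : g ≠ 0) (a : Fin m → F) :
    multAt (f * g) a = multAt f a + multAt g a := by
  obtain ⟨p, hp⟩ := exists_order_taylor_eq hf a
  obtain ⟨q, hq⟩ := exists_order_taylor_eq hg a
  have hpq : MvPowerSeries.order (taylor a (f * g) : MvPowerSeries (Fin m) F) = ↑(p + q) := by
    rw [map_mul, coe_mul, MvPowerSeries.order_mul, hp, hq, Nat.cast_add]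
  rw [multAt_eq_of_order_eq hp, multAt_eq_of_order_eq hq, multAt_eq_of_order_eq hpq]
end
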